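/- arXiv:2311.08140 — 3 statements merged into one kernel-verified Lean document; each statement's English description precedes it below -/
import Mathlib

section
/- The full tent map T₂(x) = 2·min{x, 1−x} is ergodic with respect to Lebesgue measure on [0,1]: if A ⊆ [0,1] is Borel and the Lebesgue measure of the symmetric difference T₂⁻¹(A) △ A is zero, then A has Lebesgue measure 0 or 1. -/
/-! The full tent map is a factor of the doubling map `z ↦ 2 • z` on the circle `ℝ/ℤ`, which is
ergodic. The factor map is `z ↦ 2‖z‖`: writing `z = x` with `|x| ≤ 1/2`, the point `2 • z` is at
distance `min (2|x|) (1 - 2|x|)` from `0`. It carries Haar measure to Lebesgue measure on `[0,1]`,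
because the ball of radius `ε` about `0` in the circle has measure `min 1 (2ε)`. Ergodicity passes
to factors. -/

open MeasureTheory Set

noncomputable section

/-- The full tent map on `[0,1]`. -/
def T2 : ℝ → ℝ := fun x => 2 * min x (1 - x)

/-- The rescaled tent map `t_r` on `[0,r]`. -/
def tent (r : ℝ) : ℝ → ℝ := fun x => 2 * min x (r - x)

/-- The normalizing constant `c_r = -log(1-r)`. -/
def cr (r : ℝ) : ℝ := -Real.log (1 - r)

/-- The measure `μ_r`, supported on the diagonal `Δ_r`. -/
def muR (r : ℝ) : Measure (ℝ × ℝ) :=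
  ((volume.restrict (Icc (0:ℝ) r)).withDensity
      (fun s => ENNReal.ofReal ((cr r)⁻¹ * (s / (1 - s))))).map (fun s => (s, s))

/-- The measure `ν_r`, supported on the graph `Γ_r` of `t_r`. -/
def nuR (r : ℝ) : Measure (ℝ × ℝ) :=
  ((volume.restrict (Icc (0:ℝ) r)).withDensity
      (fun _ => ENNReal.ofReal (cr r)⁻¹)).map (fun s => (s, tent r s))

/-- The uniform probability distribution on `[0,r]`. -/
def unif (r : ℝ) : Measure ℝ := (ENNReal.ofReal r)⁻¹ • volume.restrict (Icc (0:ℝ) r)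

/-- The family `R`: pairs of nonnegative finite Borel measures on `[0,1]²`
with the marginal balance conditions. -/
structure MemR (μ ν : Measure (ℝ × ℝ)) : Prop where
  fin_mu : μ univ ≠ ⊤
  fin_nu : ν univ ≠ ⊤
  supp_mu : μ ((Icc (0:ℝ) 1 ×ˢ Icc (0:ℝ) 1)ᶜ) = 0
  supp_nu : ν ((Icc (0:ℝ) 1 ×ˢ Icc (0:ℝ) 1)ᶜ) = 0
  eq_x : ∀ A : Set ℝ, MeasurableSet A →
    ∫⁻ x in A, ENNReal.ofReal (1 - x) ∂(μ.map Prod.fst) =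
      ∫⁻ x in A, ENNReal.ofReal x ∂(ν.map Prod.fst)
  eq_y : ∀ B : Set ℝ, MeasurableSet B →
    ∫⁻ y in B, ENNReal.ofReal (1 - y) ∂(μ.map Prod.snd) =
      ∫⁻ y in B, ENNReal.ofReal y ∂(ν.map Prod.snd)

/-- A coherent distribution: a probability measure on `[0,1]²` of the form
`μ + ν` for some `(μ,ν) ∈ R`. -/
def Coherent (m : Measure (ℝ × ℝ)) : Prop :=
  IsProbabilityMeasure m ∧ ∃ μ ν : Measure (ℝ × ℝ), MemR μ ν ∧ m = μ + ν

namespace AddCircle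

variable {p : ℝ} [Fact (0 < p)]

theorem exists_abs_le_half_period_coe_eq (z : AddCircle p) :
    ∃ x : ℝ, |x| ≤ p / 2 ∧ (x : AddCircle p) = z := by
  obtain ⟨⟨x, hx₁, hx₂⟩, hx⟩ := (equivIco p (-(p / 2))).symm.surjective z
  refine ⟨x, abs_le.2 ⟨hx₁, by linarith⟩, ?_⟩
  rw [← hx]
  rfl

theorem norm_two_nsmul (z : AddCircle p) : ‖2 • z‖ = min (2 * ‖z‖) (p - 2 * ‖z‖) := by
  have hp : 0 < p := Fact.out
  obtain ⟨x, hx, rfl⟩ := exists_abs_le_half_period_coe_eq z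
  have norm_coe {y : ℝ} (hy : |y| ≤ p / 2) : ‖(y : AddCircle p)‖ = |y| :=
    (norm_coe_eq_abs_iff p hp.ne').2 (by rwa [abs_of_pos hp])
  rw [norm_coe hx, ← coe_nsmul, nsmul_eq_mul, Nat.cast_ofNat]
  rcases le_total (2 * |x|) (p / 2) with hsmall | hlarge
  · rw [norm_coe (by rwa [abs_mul, abs_two]), abs_mul, abs_two, min_eq_left (by linarith)]
  rw [min_eq_right (by linarith)]
  rcases le_total 0 x with hx₀ | hx₀
  · rw [abs_of_nonneg hx₀] at *
    have hshift : ((2 * x : ℝ) : AddCircle p) = ((2 * x - p : ℝ) : AddCircle p) := by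
      rw [← coe_add_period p (2 * x - p), sub_add_cancel]
    rw [hshift, norm_coe (abs_le.2 ⟨by linarith, by linarith⟩), abs_of_nonpos (by linarith)]
    ring
  · rw [abs_of_nonpos hx₀] at *
    rw [← coe_add_period, norm_coe (abs_le.2 ⟨by linarith, by linarith⟩),
      abs_of_nonneg (by linarith)]
    ring

theorem semiconj_two_mul_norm_two_nsmul_tent :
    Function.Semiconj (fun z : AddCircle p => 2 * ‖z‖) (fun z => 2 • z) (tent p) := by
  intro z
  simp [tent, norm_two_nsmul]

theorem measurePreserving_two_mul_norm :
    MeasurePreserving (fun z : AddCircle p => 2 * ‖z‖) volume (volume.restrict (Icc 0 p)) := by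
  refine ⟨by fun_prop, Measure.ext_of_Iic _ _ fun a => ?_⟩
  have hball : (fun z : AddCircle p => 2 * ‖z‖) ⁻¹' Iic a = Metric.closedBall 0 (a / 2) := by
    ext z
    simp only [mem_preimage, mem_Iic, Metric.mem_closedBall, dist_zero_right]
    constructor <;> intro <;> linarith
  have hIcc : Iic a ∩ Icc 0 p = Icc 0 (min p a) := by
    ext x
    simp only [mem_inter_iff, mem_Iic, mem_Icc, le_min_iff]
    tauto
  rw [Measure.map_apply (by fun_prop) measurableSet_Iic, Measure.restrict_apply measurableSet_Iic,
    hball, hIcc, volume_closedBall, Real.volume_Icc, sub_zero, mul_div_cancel₀ a two_ne_zero]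

end AddCircle

theorem ergodic_tent (p : ℝ) [Fact (0 < p)] : Ergodic (tent p) (volume.restrict (Icc 0 p)) :=
  AddCircle.measurePreserving_two_mul_norm.ergodic_of_ergodic_semiconj
    (AddCircle.ergodic_nsmul (by norm_num)) (by unfold tent; fun_prop)
    AddCircle.semiconj_two_mul_norm_two_nsmul_tent

theorem Ergodic.measure_eq_zero_or_eq_of_restrict {α : Type*} [MeasurableSpace α] {μ : Measure α}
    {f : α → α} {s A : Set α} (hf : Ergodic f (μ.restrict s)) (hA : MeasurableSet A) (hAs : A ⊆ s)
    (hsymm : μ (symmDiff (f ⁻¹' A ∩ s) A) = 0) : μ A = 0 ∨ μ A = μ s := by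
  have hinv : f ⁻¹' A =ᵐ[μ.restrict s] A := by
    rw [← measure_symmDiff_eq_zero_iff, Measure.restrict_apply ((hf.measurable hA).symmDiff hA),
      inter_symmDiff_distrib_right, inter_eq_left.2 hAs]
    exact hsymm
  rw [← Measure.restrict_eq_self μ hAs]
  rcases hf.quasiErgodic.ae_empty_or_univ₀ hA.nullMeasurableSet hinv with h | h
  · exact .inl (by rw [measure_congr h, measure_empty])
  · exact .inr (by rw [measure_congr h, Measure.restrict_apply_univ])

/-- the full tent map is ergodic with respect to Lebesgue measure on `[0,1]`. -/
theorem tent_map_ergodic (A : Set ℝ) (hA : MeasurableSet A) (hA1 : A ⊆ Icc (0:ℝ) 1)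
    (hsymm : volume (symmDiff (T2 ⁻¹' A ∩ Icc (0:ℝ) 1) A) = 0) :
    volume A = 0 ∨ volume A = 1 := by
  have : Fact ((0 : ℝ) < 1) := ⟨one_pos⟩
  simpa using (ergodic_tent 1).measure_eq_zero_or_eq_of_restrict hA hA1 hsymm
end
end

section
/- For every r ∈ (0,1), the pair (μ_r, ν_r) belongs to the family R, i.e., for every Borel set A ⊆ [0,1], ∫_A (1−x) dμ_r^x = ∫_A x dν_r^x and ∫_B (1−y) dμ_r^y = ∫_B y dν_r^y; equivalently, m_r = μ_r + ν_r is a coherent distribution. -/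
/-!
Both marginals of `μ_r` have density `c_r⁻¹ x / (1 - x)` on `[0, r]`. Both marginals of `ν_r` are
`c_r⁻¹` times Lebesgue measure on `[0, r]`, the second one because the tent map `t_r` preserves
Lebesgue measure on `[0, r]` (each of its two linear branches halves the measure of a preimage).
The balance conditions therefore reduce to the pointwise identity `(1 - x) · x / (1 - x) = x`, and
the first marginal of `μ_r + ν_r` has density `c_r⁻¹ / (1 - x)`, whose integral over `[0, r]`
is `c_r⁻¹ · (-log (1 - r)) = 1`.
-/

open MeasureTheory Set

noncomputable section

section

variable {r : ℝ}

lemma cr_pos (hr : r ∈ Ioo (0:ℝ) 1) : 0 < cr r :=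
  neg_pos.2 (Real.log_neg (by linarith [hr.2]) (by linarith [hr.1]))

lemma measurable_tent (r : ℝ) : Measurable (tent r) := by
  unfold tent; fun_prop

lemma mapsTo_tent : MapsTo (tent r) (Icc 0 r) (Icc 0 r) := by
  rintro x ⟨hx0, hxr⟩
  exact ⟨mul_nonneg zero_le_two (le_min hx0 (by linarith)),
    by unfold tent; linarith [min_le_left x (r - x), min_le_right x (r - x)]⟩

lemma tent_preimage_inter_Icc (hr : 0 ≤ r) (B : Set ℝ) :
    tent r ⁻¹' B ∩ Icc 0 r =
      (2 * ·) ⁻¹' (B ∩ Icc 0 r) ∪ (r - ·) ⁻¹' ((2 * ·) ⁻¹' (B ∩ Icc 0 r)) := by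
  ext x
  simp only [mem_inter_iff, mem_union, mem_preimage, mem_Icc, tent]
  constructor
  · rintro ⟨hxB, hx0, hxr⟩
    rcases le_total x (r - x) with h | h
    · rw [min_eq_left h] at hxB
      exact Or.inl ⟨hxB, by linarith, by linarith⟩
    · rw [min_eq_right h] at hxB
      exact Or.inr ⟨hxB, by linarith, by linarith⟩
  · rintro (⟨hxB, h0, h1⟩ | ⟨hxB, h0, h1⟩)
    · rw [min_eq_left (by linarith)]
      exact ⟨hxB, by linarith, by linarith⟩
    · rw [min_eq_right (by linarith)]
      exact ⟨hxB, by linarith, by linarith⟩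

theorem map_tent_restrict_Icc (hr : 0 ≤ r) :
    (volume.restrict (Icc 0 r)).map (tent r) = volume.restrict (Icc 0 r) := by
  ext B hB
  rw [Measure.map_apply (measurable_tent r) hB, Measure.restrict_apply (measurable_tent r hB),
    Measure.restrict_apply hB, tent_preimage_inter_Icc hr]
  set S := B ∩ Icc 0 r
  have hS : MeasurableSet ((2 * ·) ⁻¹' S : Set ℝ) :=
    (hB.inter measurableSet_Icc).preimage (measurable_const_mul 2)
  have hhalf : volume ((2 * ·) ⁻¹' S) = ENNReal.ofReal 2⁻¹ * volume S := by
    simp [Real.volume_preimage_mul_left two_ne_zero S]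
  have hreflect : volume ((r - ·) ⁻¹' ((2 * ·) ⁻¹' S)) = volume ((2 * ·) ⁻¹' S) :=
    (Measure.measurePreserving_sub_left volume r).measure_preimage hS.nullMeasurableSet
  have hoverlap : volume ((2 * ·) ⁻¹' S ∩ (r - ·) ⁻¹' ((2 * ·) ⁻¹' S)) = 0 := by
    refine measure_mono_null (fun x ⟨h₁, h₂⟩ => ?_) (measure_singleton (r / 2))
    exact mem_singleton_iff.2 (by linarith [h₁.2.2, h₂.2.2])
  rw [measure_union₀ (hS.preimage (measurable_const_sub r)).nullMeasurableSet hoverlap,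
    hreflect, hhalf, ← add_mul, ← ENNReal.ofReal_add (by norm_num) (by norm_num)]
  norm_num

def muRMarginal (r : ℝ) : Measure ℝ :=
  (volume.restrict (Icc 0 r)).withDensity (fun s => ENNReal.ofReal ((cr r)⁻¹ * (s / (1 - s))))

def nuRMarginal (r : ℝ) : Measure ℝ :=
  (volume.restrict (Icc 0 r)).withDensity (fun _ => ENNReal.ofReal (cr r)⁻¹)

lemma map_fst_muR (r : ℝ) : (muR r).map Prod.fst = muRMarginal r :=
  (Measure.fst_map_prodMk (X := fun s => s) measurable_id').trans Measure.map_id'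

lemma map_snd_muR (r : ℝ) : (muR r).map Prod.snd = muRMarginal r :=
  (Measure.snd_map_prodMk (Y := fun s => s) measurable_id').trans Measure.map_id'

lemma map_fst_nuR (r : ℝ) : (nuR r).map Prod.fst = nuRMarginal r :=
  (Measure.fst_map_prodMk (measurable_tent r)).trans Measure.map_id'

lemma map_snd_nuR (hr : 0 ≤ r) : (nuR r).map Prod.snd = nuRMarginal r :=
  (Measure.snd_map_prodMk measurable_id').trans <| by
    rw [nuRMarginal, withDensity_const, Measure.map_smul, map_tent_restrict_Icc hr]

lemma setLIntegral_one_sub_muRMarginal (hr : r < 1) {A : Set ℝ} (hA : MeasurableSet A) :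
    ∫⁻ x in A, ENNReal.ofReal (1 - x) ∂muRMarginal r =
      ∫⁻ x in A, ENNReal.ofReal x ∂nuRMarginal r := by
  rw [muRMarginal, nuRMarginal,
    setLIntegral_withDensity_eq_setLIntegral_mul _ (by fun_prop) (by fun_prop) hA,
    setLIntegral_withDensity_eq_setLIntegral_mul _ (by fun_prop) (by fun_prop) hA,
    Measure.restrict_restrict hA]
  refine setLIntegral_congr_fun (hA.inter measurableSet_Icc) fun x ⟨_, hx0, hxr⟩ => ?_
  have h1x : 0 < 1 - x := by linarith
  rw [Pi.mul_apply, Pi.mul_apply, ← ENNReal.ofReal_mul' h1x.le, ← ENNReal.ofReal_mul' hx0]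
  congr 1
  field_simp

lemma integral_inv_one_sub (hr : r < 1) : ∫ s in 0..r, (1 - s)⁻¹ = -Real.log (1 - r) := by
  rw [intervalIntegral.integral_comp_sub_left (fun s => s⁻¹) 1, sub_zero,
    integral_inv_of_pos (by linarith) one_pos, one_div, Real.log_inv]

lemma muRMarginal_add_nuRMarginal (hr : r ∈ Ioo 0 1) :
    muRMarginal r + nuRMarginal r =
      (volume.restrict (Icc 0 r)).withDensity fun s => ENNReal.ofReal ((cr r)⁻¹ * (1 - s)⁻¹) := by
  rw [muRMarginal, nuRMarginal, ← withDensity_add_left (by fun_prop)]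
  refine withDensity_congr_ae ?_
  filter_upwards [ae_restrict_mem measurableSet_Icc] with s ⟨hs0, hsr⟩
  have h1s : 0 < 1 - s := by linarith [hr.2]
  have hc := cr_pos hr
  rw [Pi.add_apply, ← ENNReal.ofReal_add (by positivity) (by positivity)]
  congr 1
  field_simp
  ring

lemma setLIntegral_Icc_cr_inv_mul_inv_one_sub (hr : r ∈ Ioo 0 1) :
    ∫⁻ s in Icc 0 r, ENNReal.ofReal ((cr r)⁻¹ * (1 - s)⁻¹) = 1 := by
  have hc := cr_pos hr
  have hcont : ContinuousOn (fun s : ℝ => (cr r)⁻¹ * (1 - s)⁻¹) (Icc 0 r) :=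
    continuousOn_const.mul <| (continuousOn_const.sub continuousOn_id).inv₀ fun s hs =>
      (sub_pos.2 (hs.2.trans_lt hr.2)).ne'
  have hnonneg : 0 ≤ᵐ[volume.restrict (Icc 0 r)] fun s : ℝ => (cr r)⁻¹ * (1 - s)⁻¹ := by
    filter_upwards [ae_restrict_mem measurableSet_Icc] with s hs
    have h1s : 0 < 1 - s := by linarith [hs.2, hr.2]
    positivity
  rw [← ofReal_integral_eq_lintegral_ofReal hcont.integrableOn_Icc hnonneg,
    integral_Icc_eq_integral_Ioc, ← intervalIntegral.integral_of_le hr.1.le,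
    intervalIntegral.integral_const_mul, integral_inv_one_sub hr.2, ← cr,
    inv_mul_cancel₀ hc.ne', ENNReal.ofReal_one]

lemma muR_add_nuR_univ (hr : r ∈ Ioo 0 1) : (muR r + nuR r) univ = 1 := by
  rw [← Measure.fst_univ, Measure.fst_add, Measure.fst, Measure.fst, map_fst_muR, map_fst_nuR,
    muRMarginal_add_nuRMarginal hr, withDensity_apply _ MeasurableSet.univ,
    Measure.restrict_univ, setLIntegral_Icc_cr_inv_mul_inv_one_sub hr]

lemma map_prodMk_unitSquare_compl {ρ : Measure ℝ} (hρ : ρ ≪ volume.restrict (Icc 0 r))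
    (hr : r ≤ 1) {f : ℝ → ℝ} (hf : Measurable f) (hfr : MapsTo f (Icc 0 r) (Icc 0 1)) :
    ρ.map (fun s => (s, f s)) ((Icc (0:ℝ) 1 ×ˢ Icc (0:ℝ) 1)ᶜ) = 0 := by
  rw [Measure.map_apply (measurable_id'.prodMk hf) (measurableSet_Icc.prod measurableSet_Icc).compl]
  refine ae_iff.1 (hρ.ae_le ?_)
  filter_upwards [ae_restrict_mem measurableSet_Icc] with x hx
  exact ⟨⟨hx.1, hx.2.trans hr⟩, hfr hx⟩

end

/-- `(μ_r, ν_r) ∈ R`; equivalently `m_r = μ_r + ν_r` is coherent. -/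
theorem muR_nuR_memR (r : ℝ) (hr : r ∈ Ioo (0:ℝ) 1) :
    MemR (muR r) (nuR r) ∧ Coherent (muR r + nuR r) := by
  have hmass := muR_add_nuR_univ hr
  have hfin : muR r univ ≠ ⊤ ∧ nuR r univ ≠ ⊤ :=
    ENNReal.add_ne_top.1 (by rw [← Measure.add_apply, hmass]; exact ENNReal.one_ne_top)
  have hsquare : Icc 0 r ⊆ Icc (0:ℝ) 1 := Icc_subset_Icc_right hr.2.le
  have hmem : MemR (muR r) (nuR r) :=
    { fin_mu := hfin.1
      fin_nu := hfin.2
      supp_mu := map_prodMk_unitSquare_compl (withDensity_absolutelyContinuous _ _) hr.2.le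
        measurable_id' fun _ hx => hsquare hx
      supp_nu := map_prodMk_unitSquare_compl (withDensity_absolutelyContinuous _ _) hr.2.le
        (measurable_tent r) (mapsTo_tent.mono_right hsquare)
      eq_x := fun _ hA => by
        rw [map_fst_muR, map_fst_nuR]; exact setLIntegral_one_sub_muRMarginal hr.2 hA
      eq_y := fun _ hB => by
        rw [map_snd_muR, map_snd_nuR hr.1.le]; exact setLIntegral_one_sub_muRMarginal hr.2 hB }
  exact ⟨hmem, ⟨hmass⟩, muR r, nuR r, hmem, rfl⟩
end
end

section
/- Let m be a coherent distribution and let (μ, ν) and (μ̃, ν̃) both belong to R with m = μ + ν = μ̃ + ν̃. Then the marginals agree: μ^x = μ̃^x, μ^y = μ̃^y, ν^x = ν̃^x, and ν^y = ν̃^y. -/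
open MeasureTheory Set

noncomputable section

lemma marg_supp_fst (μ : Measure (ℝ × ℝ)) (h : μ ((Icc (0:ℝ) 1 ×ˢ Icc (0:ℝ) 1)ᶜ) = 0) :
    (μ.map Prod.fst) (Icc (0:ℝ) 1)ᶜ = 0 := by
  rw [Measure.map_apply measurable_fst measurableSet_Icc.compl]
  have hsub : Prod.fst ⁻¹' (Icc (0:ℝ) 1)ᶜ ⊆ (Icc (0:ℝ) 1 ×ˢ Icc (0:ℝ) 1)ᶜ :=
    fun p hp hmem => hp hmem.1
  exact measure_mono_null hsub h

lemma marg_supp_snd (μ : Measure (ℝ × ℝ)) (h : μ ((Icc (0:ℝ) 1 ×ˢ Icc (0:ℝ) 1)ᶜ) = 0) :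
    (μ.map Prod.snd) (Icc (0:ℝ) 1)ᶜ = 0 := by
  rw [Measure.map_apply measurable_snd measurableSet_Icc.compl]
  have hsub : Prod.snd ⁻¹' (Icc (0:ℝ) 1)ᶜ ⊆ (Icc (0:ℝ) 1 ×ˢ Icc (0:ℝ) 1)ᶜ :=
    fun p hp hmem => hp hmem.2
  exact measure_mono_null hsub h

lemma mu_key (μ ν : Measure ℝ) (hs : μ (Icc (0:ℝ) 1)ᶜ = 0)
    (heq : ∀ A : Set ℝ, MeasurableSet A →
      ∫⁻ x in A, ENNReal.ofReal (1 - x) ∂μ = ∫⁻ x in A, ENNReal.ofReal x ∂ν)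
    {A : Set ℝ} (hA : MeasurableSet A) :
    μ A = ∫⁻ x in A, ENNReal.ofReal x ∂(μ + ν) := by
  have hae : ∀ᵐ x ∂μ, x ∈ Icc (0:ℝ) 1 := by
    rw [ae_iff]
    exact hs
  have h1 : ∫⁻ x in A, ENNReal.ofReal x ∂(μ + ν)
      = ∫⁻ x in A, ENNReal.ofReal x ∂μ + ∫⁻ x in A, ENNReal.ofReal x ∂ν := by
    rw [Measure.restrict_add, lintegral_add_measure]
  rw [h1, ← heq A hA,
    ← lintegral_add_left (by exact ENNReal.measurable_ofReal.comp measurable_id)]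
  have h2 : ∫⁻ x in A, (ENNReal.ofReal x + ENNReal.ofReal (1 - x)) ∂μ
      = ∫⁻ x in A, 1 ∂μ := by
    refine lintegral_congr_ae ?_
    filter_upwards [ae_restrict_of_ae hae] with x hx
    rw [← ENNReal.ofReal_add hx.1 (by linarith [hx.2])]
    norm_num
  rw [h2, setLIntegral_one]

lemma nu_key (μ ν : Measure ℝ) (hs : ν (Icc (0:ℝ) 1)ᶜ = 0)
    (heq : ∀ A : Set ℝ, MeasurableSet A →
      ∫⁻ x in A, ENNReal.ofReal (1 - x) ∂μ = ∫⁻ x in A, ENNReal.ofReal x ∂ν)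
    {A : Set ℝ} (hA : MeasurableSet A) :
    ν A = ∫⁻ x in A, ENNReal.ofReal (1 - x) ∂(μ + ν) := by
  have hae : ∀ᵐ x ∂ν, x ∈ Icc (0:ℝ) 1 := by
    rw [ae_iff]
    exact hs
  have h1 : ∫⁻ x in A, ENNReal.ofReal (1 - x) ∂(μ + ν)
      = ∫⁻ x in A, ENNReal.ofReal (1 - x) ∂μ + ∫⁻ x in A, ENNReal.ofReal (1 - x) ∂ν := by
    rw [Measure.restrict_add, lintegral_add_measure]
  rw [h1, heq A hA,
    ← lintegral_add_left (by exact ENNReal.measurable_ofReal.comp measurable_id)]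
  have h2 : ∫⁻ x in A, (ENNReal.ofReal x + ENNReal.ofReal (1 - x)) ∂ν
      = ∫⁻ x in A, 1 ∂ν := by
    refine lintegral_congr_ae ?_
    filter_upwards [ae_restrict_of_ae hae] with x hx
    rw [← ENNReal.ofReal_add hx.1 (by linarith [hx.2])]
    norm_num
  rw [h2, setLIntegral_one]

/-- two representations of the same coherent distribution have
equal marginals. -/
theorem representations_equal_marginals (μ ν μ' ν' : Measure (ℝ × ℝ))
    (h : MemR μ ν) (h' : MemR μ' ν') (heq : μ + ν = μ' + ν') :
    μ.map Prod.fst = μ'.map Prod.fst ∧ μ.map Prod.snd = μ'.map Prod.snd ∧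
      ν.map Prod.fst = ν'.map Prod.fst ∧ ν.map Prod.snd = ν'.map Prod.snd := by
  have hmx : (μ + ν).map Prod.fst = (μ' + ν').map Prod.fst := by rw [heq]
  have hmy : (μ + ν).map Prod.snd = (μ' + ν').map Prod.snd := by rw [heq]
  have hax : (μ + ν).map Prod.fst = μ.map Prod.fst + ν.map Prod.fst :=
    Measure.map_add μ ν measurable_fst
  have hax' : (μ' + ν').map Prod.fst = μ'.map Prod.fst + ν'.map Prod.fst :=
    Measure.map_add μ' ν' measurable_fst
  have hay : (μ + ν).map Prod.snd = μ.map Prod.snd + ν.map Prod.snd :=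
    Measure.map_add μ ν measurable_snd
  have hay' : (μ' + ν').map Prod.snd = μ'.map Prod.snd + ν'.map Prod.snd :=
    Measure.map_add μ' ν' measurable_snd
  refine ⟨?_, ?_, ?_, ?_⟩
  · ext A hA
    rw [mu_key _ _ (marg_supp_fst μ h.supp_mu) h.eq_x hA,
      mu_key _ _ (marg_supp_fst μ' h'.supp_mu) h'.eq_x hA, ← hax, ← hax', hmx]
  · ext A hA
    rw [mu_key _ _ (marg_supp_snd μ h.supp_mu) h.eq_y hA,
      mu_key _ _ (marg_supp_snd μ' h'.supp_mu) h'.eq_y hA, ← hay, ← hay', hmy]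
  · ext A hA
    rw [nu_key _ _ (marg_supp_fst ν h.supp_nu) h.eq_x hA,
      nu_key _ _ (marg_supp_fst ν' h'.supp_nu) h'.eq_x hA, ← hax, ← hax', hmx]
  · ext A hA
    rw [nu_key _ _ (marg_supp_snd ν h.supp_nu) h.eq_y hA,
      nu_key _ _ (marg_supp_snd ν' h'.supp_nu) h'.eq_y hA, ← hay, ← hay', hmy]
end
end
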